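/- For every (x,v) ∈ ℝ³ × ℝ³ with v₁² + v₂² + v₃² = 1 and v₃² ≠ 1, the iterated Lie bracket [X̃₁, [X̃₁, X̃₀]] evaluated at (x,v) equals (−cos x₃, −sin x₃, 0, 0, 0, 0) − (v₃²(v₁ sin x₃ − v₂ cos x₃)/√(1−v₃²)) · (0, 0, 0, e₄(v)) − (v₃(v₂ sin x₃ + v₁ cos x₃)/√(1−v₃²)) · (0, 0, 0, e₅(v)). -/

import Mathlib

/-- The phase space `ℝ³ × ℝ³` with coordinates `(x₁,x₂,x₃,v₁,v₂,v₃)`. -/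
abbrev E6 : Type := (Fin 3 → ℝ) × (Fin 3 → ℝ)

/-- The Lie bracket of two vector fields on a normed space:
`[V,W](x) = DW(x)·V(x) − DV(x)·W(x)`. -/
noncomputable def lieBracket {E : Type*} [NormedAddCommGroup E] [NormedSpace ℝ E]
    (V W : E → E) : E → E :=
  fun x => fderiv ℝ W x (V x) - fderiv ℝ V x (W x)

/-- The drift vector field `X̃₀` of the projective process. -/
noncomputable def Xt0 : E6 → E6 := fun w =>
  let x := w.1; let v := w.2
  let α : ℝ := -(v 2) * v 0 * Real.sin (x 2) + v 2 * v 1 * Real.cos (x 2)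
  (![Real.cos (x 2), Real.sin (x 2), 1],
   ![-(v 2) * Real.sin (x 2) - α * v 0, v 2 * Real.cos (x 2) - α * v 1, -(α * v 2)])

/-- The vector field `X̃₁ = (0,0,1,0,0,0)`. -/
noncomputable def Xt1 : E6 → E6 := fun _ => (![0, 0, 1], ![0, 0, 0])

/-- The common shape of `X̃₂,…,X̃₅`. -/
noncomputable def XtGen (B : (Fin 3 → ℝ) → ℝ) (c : E6 → ℝ) : E6 → E6 := fun w =>
  let v := w.2
  (![0, 0, B w.1],
   ![c w * (-(v 2) * v 0), c w * (-(v 2) * v 1), c w * (1 - (v 2) ^ 2)])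

noncomputable def Xt2 : E6 → E6 :=
  XtGen (fun x => Real.sin (x 0)) (fun w => w.2 0 * Real.cos (w.1 0))

noncomputable def Xt3 : E6 → E6 :=
  XtGen (fun x => Real.cos (x 0)) (fun w => -(w.2 0) * Real.sin (w.1 0))

noncomputable def Xt4 : E6 → E6 :=
  XtGen (fun x => Real.sin (x 1)) (fun w => w.2 1 * Real.cos (w.1 1))

noncomputable def Xt5 : E6 → E6 :=
  XtGen (fun x => Real.cos (x 1)) (fun w => -(w.2 1) * Real.sin (w.1 1))

/-- `e₄(v) = (1/√(1−v₃²))·(−v₃v₁, −v₃v₂, 1−v₃²)`. -/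
noncomputable def e₄ (v : Fin 3 → ℝ) : Fin 3 → ℝ :=
  (Real.sqrt (1 - (v 2) ^ 2))⁻¹ • ![-(v 2) * v 0, -(v 2) * v 1, 1 - (v 2) ^ 2]

/-- `e₅(v) = (1/√(1−v₃²))·(−v₂, v₁, 0)`. -/
noncomputable def e₅ (v : Fin 3 → ℝ) : Fin 3 → ℝ :=
  (Real.sqrt (1 - (v 2) ^ 2))⁻¹ • ![-(v 1), v 0, 0]


/-!
`X̃₁` is the constant field `∂/∂x₃`, so bracketing with it is differentiation in `x₃`.
Along each `x₃`-line, `X̃₀ = X̃₁ + cos x₃ • P + sin x₃ • Q` with `P, Q` independent of `x₃`,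
hence `∂²X̃₀/∂x₃² = X̃₁ - X̃₀`. When `|v| = 1` and `v₃² ≠ 1`, the velocity part of `X̃₁ - X̃₀`
is orthogonal to `v`, so it expands in the orthonormal frame `e₄(v), e₅(v)` of `v^⊥`.
-/

open Real

section LineDerivative

variable {E F : Type*} [NormedAddCommGroup E] [NormedSpace ℝ E]
  [NormedAddCommGroup F] [NormedSpace ℝ F]

theorem lieBracket_const_left (u : E) (f : E → E) (w : E) :
    lieBracket (fun _ => u) f w = fderiv ℝ f w u := by
  simp [lieBracket]

theorem fderiv_apply_eq_deriv_line {f : E → F} {w u : E} {s : ℝ}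
    (hf : DifferentiableAt ℝ f (w + s • u)) :
    fderiv ℝ f (w + s • u) u = deriv (fun t : ℝ => f (w + t • u)) s := by
  have hline : HasDerivAt (fun t : ℝ => w + t • u) u s :=
    ((hasDerivAt_id s).smul_const u).const_add w |>.congr_deriv (one_smul ℝ u)
  exact (hf.hasFDerivAt.comp_hasDerivAt s hline).deriv.symm

theorem hasDerivAt_cos_smul_add_sin_smul (θ t : ℝ) (P Q : F) :
    HasDerivAt (fun t => cos (θ + t) • P + sin (θ + t) • Q)
      (cos (θ + t) • Q + sin (θ + t) • -P) t := by
  have h : HasDerivAt (fun t => θ + t) 1 t := (hasDerivAt_id t).const_add θ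
  refine ((h.cos.smul_const P).add (h.sin.smul_const Q)).congr_deriv ?_
  rw [smul_neg, neg_mul, neg_smul, mul_one, mul_one, add_comm]

theorem fderiv_fderiv_apply_eq_of_cos_sin {f a P Q : E → F} {θ : E → ℝ} {u : E}
    (hf : ContDiff ℝ 2 f)
    (h : ∀ w (t : ℝ), f (w + t • u) = a w + cos (θ w + t) • P w + sin (θ w + t) • Q w)
    (w : E) :
    fderiv ℝ (fun w' => fderiv ℝ f w' u) w u = a w - f w := by
  have hfd : Differentiable ℝ f := hf.differentiable two_ne_zero
  have hgd : Differentiable ℝ (fun w' => fderiv ℝ f w' u) :=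
    ((hf.fderiv_right (m := 1) le_rfl).clm_apply contDiff_const).differentiable one_ne_zero
  have hline : ∀ s : ℝ, fderiv ℝ f (w + s • u) u
      = cos (θ w + s) • Q w + sin (θ w + s) • -P w := by
    intro s
    rw [fderiv_apply_eq_deriv_line (hfd _)]
    simp_rw [h w, add_assoc]
    exact ((hasDerivAt_cos_smul_add_sin_smul (θ w) s (P w) (Q w)).const_add (a w)).deriv
  have hw : f w = a w + cos (θ w) • P w + sin (θ w) • Q w := by simpa using h w 0
  calc fderiv ℝ (fun w' => fderiv ℝ f w' u) w u
      = deriv (fun s : ℝ => fderiv ℝ f (w + s • u) u) 0 := by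
        simpa using fderiv_apply_eq_deriv_line (u := u) (s := 0) (hgd _)
    _ = cos (θ w + 0) • -P w + sin (θ w + 0) • -Q w := by
        simp_rw [hline]
        exact (hasDerivAt_cos_smul_add_sin_smul (θ w) 0 (Q w) (-P w)).deriv
    _ = a w - f w := by
        rw [add_zero, hw]
        module

end LineDerivative

def x₃Dir : E6 := (![0, 0, 1], ![0, 0, 0])

theorem Xt1_eq_const : Xt1 = fun _ => x₃Dir := rfl

theorem Xt0_add_smul_x₃Dir (w : E6) (t : ℝ) :
    Xt0 (w + t • x₃Dir) = Xt1 w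
      + cos (w.1 2 + t) • ((![1, 0, 0],
          ![-(w.2 2 * w.2 1 * w.2 0), w.2 2 - w.2 2 * w.2 1 ^ 2, -(w.2 2 ^ 2 * w.2 1)]) : E6)
      + sin (w.1 2 + t) • ((![0, 1, 0],
          ![w.2 2 * w.2 0 ^ 2 - w.2 2, w.2 2 * w.2 0 * w.2 1, w.2 2 ^ 2 * w.2 0]) : E6) := by
  refine Prod.ext ?_ ?_ <;> funext i <;> fin_cases i <;> simp [Xt0, Xt1, x₃Dir] <;> ring

theorem contDiff_Xt0 : ContDiff ℝ 2 Xt0 := by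
  refine ContDiff.prodMk (contDiff_pi.2 fun i => ?_) (contDiff_pi.2 fun i => ?_) <;>
    fin_cases i <;>
    simp only [Fin.zero_eta, Fin.mk_one, Fin.reduceFinMk, Matrix.cons_val_zero,
      Matrix.cons_val_one, Matrix.cons_val] <;>
    fun_prop

theorem Xt1_sub_Xt0_eq (x v : Fin 3 → ℝ)
    (hv : (v 0) ^ 2 + (v 1) ^ 2 + (v 2) ^ 2 = 1) (hv3 : (v 2) ^ 2 ≠ 1) :
    Xt1 (x, v) - Xt0 (x, v)
      = ((![-cos (x 2), -sin (x 2), 0], ![0, 0, 0]) : E6)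
        - ((v 2) ^ 2 * (v 0 * sin (x 2) - v 1 * cos (x 2)) / √(1 - (v 2) ^ 2))
            • ((![0, 0, 0], e₄ v) : E6)
        - (v 2 * (v 1 * sin (x 2) + v 0 * cos (x 2)) / √(1 - (v 2) ^ 2))
            • ((![0, 0, 0], e₅ v) : E6) := by
  have hpos : 0 < 1 - v 2 ^ 2 := by
    have : v 2 ^ 2 ≤ 1 := by nlinarith [sq_nonneg (v 0), sq_nonneg (v 1)]
    exact sub_pos.2 (lt_of_le_of_ne this hv3)
  have hsq : √(1 - v 2 ^ 2) ^ 2 = 1 - v 2 ^ 2 := sq_sqrt hpos.le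
  have hne : √(1 - v 2 ^ 2) ≠ 0 := (sqrt_pos.2 hpos).ne'
  refine Prod.ext ?_ ?_ <;> funext i <;> fin_cases i <;>
      simp [Xt0, Xt1, e₄, e₅] <;> field_simp
  · rw [hsq]; linear_combination (-(v 2) * Real.sin (x 2)) * hv
  · rw [hsq]; linear_combination (v 2 * Real.cos (x 2)) * hv
  · rw [hsq]; ring

/-- For `(x,v)` with `|v| = 1` and `v₃² ≠ 1`,
`[X̃₁, [X̃₁, X̃₀]](x,v) = (−cos x₃, −sin x₃, 0, 0, 0, 0)
  − (v₃²(v₁ sin x₃ − v₂ cos x₃)/√(1−v₃²))·(0,0,0,e₄(v))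
  − (v₃(v₂ sin x₃ + v₁ cos x₃)/√(1−v₃²))·(0,0,0,e₅(v))`. -/
theorem statement6 (x v : Fin 3 → ℝ)
    (hv : (v 0) ^ 2 + (v 1) ^ 2 + (v 2) ^ 2 = 1) (hv3 : (v 2) ^ 2 ≠ 1) :
    lieBracket Xt1 (lieBracket Xt1 Xt0) (x, v)
      = ((![-Real.cos (x 2), -Real.sin (x 2), 0], ![0, 0, 0]) : E6)
        - ((v 2) ^ 2 * (v 0 * Real.sin (x 2) - v 1 * Real.cos (x 2)) / Real.sqrt (1 - (v 2) ^ 2))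
            • ((![0, 0, 0], e₄ v) : E6)
        - (v 2 * (v 1 * Real.sin (x 2) + v 0 * Real.cos (x 2)) / Real.sqrt (1 - (v 2) ^ 2))
            • ((![0, 0, 0], e₅ v) : E6) := by
  have hfirst : lieBracket Xt1 Xt0 = fun w => fderiv ℝ Xt0 w x₃Dir :=
    funext (lieBracket_const_left x₃Dir Xt0)
  rw [hfirst, Xt1_eq_const, lieBracket_const_left,
    fderiv_fderiv_apply_eq_of_cos_sin contDiff_Xt0 Xt0_add_smul_x₃Dir]
  exact Xt1_sub_Xt0_eq x v hv hv3
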